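/- Let H be a covering 3-hypergraph that is not eulerian, F a minimum Euler family of H with incidence graph G, and G_F the subgraph of G corresponding to F. Then G has no F-diminishing cycle. -/

import Mathlib

open scoped Classical

/-- A hypergraph: a finite nonempty vertex type `V`, a finite index type `E` of
edges (so that repeated edges are allowed, as in a multiset of edges), and a map
`mem` assigning to each edge the finite set of its vertices. -/
structure Hypergraph' where
  V : Type
  E : Type
  [fintypeV : Fintype V]
  [fintypeE : Fintype E]
  [nonemptyV : Nonempty V]
  mem : E → Finset V

attribute [instance] Hypergraph'.fintypeV Hypergraph'.fintypeE Hypergraph'.nonemptyV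

namespace Hypergraph'

/-- A walk `v₀ e₁ v₁ e₂ … e_k v_k` in a hypergraph: consecutive anchors are
distinct and both lie in the connecting edge. -/
structure Walk (H : Hypergraph') where
  k : ℕ
  vtx : Fin (k + 1) → H.V
  edge : Fin k → H.E
  mem_left : ∀ i : Fin k, vtx i.castSucc ∈ H.mem (edge i)
  mem_right : ∀ i : Fin k, vtx i.succ ∈ H.mem (edge i)
  ne : ∀ i : Fin k, vtx i.castSucc ≠ vtx i.succ

/-- A trail is a walk with pairwise distinct edges. -/
def Walk.IsTrail {H : Hypergraph'} (W : H.Walk) : Prop :=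
  Function.Injective W.edge

/-- A closed walk: `v₀ = v_k` and `k ≥ 2`. -/
def Walk.IsClosed {H : Hypergraph'} (W : H.Walk) : Prop :=
  W.vtx 0 = W.vtx (Fin.last W.k) ∧ 2 ≤ W.k

def Walk.IsClosedTrail {H : Hypergraph'} (W : H.Walk) : Prop :=
  W.IsTrail ∧ W.IsClosed

/-- The anchors of a walk. -/
def Walk.anchors {H : Hypergraph'} (W : H.Walk) : Set H.V := Set.range W.vtx

/-- The set of edges traversed by a walk. -/
def Walk.edgeSet {H : Hypergraph'} (W : H.Walk) : Set H.E := Set.range W.edge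

/-- An Euler tour: a closed trail traversing every edge exactly once. -/
def IsEulerTour (H : Hypergraph') (W : H.Walk) : Prop :=
  W.IsClosedTrail ∧ Function.Bijective W.edge

def HasEulerTour (H : Hypergraph') : Prop := ∃ W : H.Walk, H.IsEulerTour W

/-- A hypergraph is eulerian if it has no edges or admits an Euler tour. -/
def IsEulerian (H : Hypergraph') : Prop := IsEmpty H.E ∨ H.HasEulerTour

/-- An Euler family: a set of pairwise anchor-disjoint, edge-disjoint closed
trails jointly traversing every edge exactly once. -/
def IsEulerFamily (H : Hypergraph') (F : Set H.Walk) : Prop :=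
  (∀ W ∈ F, W.IsClosedTrail) ∧
  (∀ W ∈ F, ∀ W' ∈ F, W ≠ W' →
    Disjoint W.anchors W'.anchors ∧ Disjoint W.edgeSet W'.edgeSet) ∧
  (∀ e : H.E, ∃ W ∈ F, e ∈ W.edgeSet)

/-- A hypergraph is quasi-eulerian if it has no edges or admits an Euler family. -/
def IsQuasiEulerian (H : Hypergraph') : Prop :=
  IsEmpty H.E ∨ ∃ F : Set H.Walk, H.IsEulerFamily F

/-- A minimum Euler family: one with the fewest components. -/
def IsMinEulerFamily (H : Hypergraph') (F : Set H.Walk) : Prop :=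
  H.IsEulerFamily F ∧ ∀ F' : Set H.Walk, H.IsEulerFamily F' → F.ncard ≤ F'.ncard

/-- `H` is `k`-uniform if each edge has exactly `k` vertices. -/
def IsUniform (H : Hypergraph') (k : ℕ) : Prop := ∀ e : H.E, (H.mem e).card = k

/-- A covering `k`-hypergraph (`k ≥ 3`): a nonempty `k`-uniform hypergraph in
which every `(k-1)`-subset of the vertex set lies in at least one edge. -/
def IsCovering (H : Hypergraph') (k : ℕ) : Prop :=
  3 ≤ k ∧ Nonempty H.E ∧ H.IsUniform k ∧
    ∀ S : Finset H.V, S.card = k - 1 → ∃ e : H.E, S ⊆ H.mem e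

/-- The incidence graph of a hypergraph: the bipartite simple graph on
`V ⊕ E` joining `v` and `e` exactly when `v ∈ e`. -/
def incidenceGraph (H : Hypergraph') : SimpleGraph (H.V ⊕ H.E) where
  Adj x y :=
    (∃ v e, x = Sum.inl v ∧ y = Sum.inr e ∧ v ∈ H.mem e) ∨
    (∃ v e, x = Sum.inr e ∧ y = Sum.inl v ∧ v ∈ H.mem e)
  symm := by
    constructor
    rintro x y (⟨v, e, rfl, rfl, h⟩ | ⟨v, e, rfl, rfl, h⟩)
    · exact Or.inr ⟨v, e, rfl, rfl, h⟩
    · exact Or.inl ⟨v, e, rfl, rfl, h⟩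
  loopless := by
    constructor
    rintro x (⟨v, e, rfl, h, -⟩ | ⟨v, e, rfl, h, -⟩) <;> exact absurd h (by simp)

/-- `v` and `e` appear consecutively in some trail of the family `F`. -/
def ConsecIn (H : Hypergraph') (F : Set H.Walk) (v : H.V) (e : H.E) : Prop :=
  ∃ W ∈ F, ∃ i : Fin W.k, W.edge i = e ∧ (W.vtx i.castSucc = v ∨ W.vtx i.succ = v)

/-- The spanning subgraph of the incidence graph corresponding to an Euler
family `F`: its edges are the incident pairs `ve` consecutive in some trail of `F`. -/
def eulerSubgraph (H : Hypergraph') (F : Set H.Walk) : SimpleGraph (H.V ⊕ H.E) where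
  Adj x y :=
    (∃ v e, x = Sum.inl v ∧ y = Sum.inr e ∧ H.ConsecIn F v e) ∨
    (∃ v e, x = Sum.inr e ∧ y = Sum.inl v ∧ H.ConsecIn F v e)
  symm := by
    constructor
    rintro x y (⟨v, e, rfl, rfl, h⟩ | ⟨v, e, rfl, rfl, h⟩)
    · exact Or.inr ⟨v, e, rfl, rfl, h⟩
    · exact Or.inl ⟨v, e, rfl, rfl, h⟩
  loopless := by
    constructor
    rintro x (⟨v, e, rfl, h, -⟩ | ⟨v, e, rfl, h, -⟩) <;> exact absurd h (by simp)

end Hypergraph'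

/-- The degree of a vertex of a simple graph (number of neighbours). -/
noncomputable def sdeg {α : Type*} (G : SimpleGraph α) (x : α) : ℕ :=
  (G.neighborSet x).ncard

/-- A connected component of a simple graph is nontrivial if it contains an edge. -/
def NontrivComp {α : Type*} (G : SimpleGraph α) (c : G.ConnectedComponent) : Prop :=
  ∃ x y, G.Adj x y ∧ G.connectedComponentMk x = c

/-- The number of nontrivial connected components of a simple graph. -/
noncomputable def ntComps {α : Type*} (G : SimpleGraph α) : ℕ :=
  {c : G.ConnectedComponent | NontrivComp G c}.ncard

/-- A cut vertex of a simple graph: a vertex whose deletion increases the number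
of connected components, i.e. some two vertices distinct from it are joined by a
walk but by no walk avoiding it. -/
def IsCutVtx {α : Type*} (G : SimpleGraph α) (v : α) : Prop :=
  ∃ x y, x ≠ v ∧ y ≠ v ∧ G.Reachable x y ∧ ¬ ∃ p : G.Walk x y, v ∉ p.support

/-- An `F`-interchanging cycle: a cycle of the incidence graph such that every
e-vertex on it is incident in `G_F` with exactly one edge of the cycle. -/
def IsInterchanging (H : Hypergraph') (F : Set H.Walk) {x : H.V ⊕ H.E}
    (C : (H.incidenceGraph).Walk x x) : Prop :=
  C.IsCycle ∧ ∀ e : H.E, (Sum.inr e : H.V ⊕ H.E) ∈ C.support →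
    ∃! s : Sym2 (H.V ⊕ H.E),
      s ∈ C.edges ∧ (Sum.inr e : H.V ⊕ H.E) ∈ s ∧ s ∈ (H.eulerSubgraph F).edgeSet

/-- The symmetric difference of a simple graph with a set of potential edges. -/
def symmDiffEdges {α : Type*} (G : SimpleGraph α) (s : Set (Sym2 α)) : SimpleGraph α :=
  SimpleGraph.fromEdgeSet (symmDiff G.edgeSet s)

/-- An `F`-diminishing cycle: an `F`-interchanging cycle `C` such that
`G_F Δ C` has fewer nontrivial connected components than `G_F`. -/
def IsDiminishing (H : Hypergraph') (F : Set H.Walk) {x : H.V ⊕ H.E}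
    (C : (H.incidenceGraph).Walk x x) : Prop :=
  IsInterchanging H F C ∧
    ntComps (symmDiffEdges (H.eulerSubgraph F) {s | s ∈ C.edges}) <
      ntComps (H.eulerSubgraph F)

/-!
A cycle `C` that is `F`-interchanging meets every e-vertex on it in two edges, exactly one of
which lies in `G_F`; so in `G_F Δ C` every e-vertex still has degree `2` and every v-vertex
even degree. Any such subgraph of the incidence graph comes from an Euler family: an Euler
circuit of each nontrivial component, read alternately through v- and e-vertices, is a closed
trail of `H`. The resulting family has at most as many members as `G_F Δ C` has nontrivial
components, so fewer than `|F|`, since `G_F` has at most `|F|` of them.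
-/

open SimpleGraph

section Graph

variable {α : Type*} {G : SimpleGraph α}

lemma Fin.even_ncard_setOf_castSucc_eq_or_succ_eq {β : Type*} {n : ℕ} (f : Fin (n + 1) → β)
    (hf : f 0 = f (Fin.last n)) (hne : ∀ i : Fin n, f i.castSucc ≠ f i.succ) (b : β) :
    Even {i : Fin n | f i.castSucc = b ∨ f i.succ = b}.ncard := by
  cases n with
  | zero => simp [Set.eq_empty_of_isEmpty]
  | succ n =>
    have hdisj : Disjoint {i | f (Fin.castSucc i) = b} {i | f (Fin.succ i) = b} :=
      Set.disjoint_left.mpr fun i h1 h2 => hne i (h1.trans h2.symm)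
    have hshift : {i : Fin (n + 1) | f i.succ = b} =
        (Equiv.addRight 1) ⁻¹' {i | f (Fin.castSucc i) = b} := by
      ext i
      induction i using Fin.lastCases with
      | last => simp [Fin.last_add_one, hf]
      | cast j =>
        simp only [Set.mem_ofPred_eq, Set.mem_preimage, Equiv.coe_addRight, Fin.coeSucc_eq_succ,
          Fin.succ_castSucc]
    rw [Set.ofPred_or, Set.ncard_union_eq hdisj, hshift,
      Set.ncard_preimage_of_injective_subset_range (Equiv.injective _)
        fun i _ => (Equiv.addRight 1).surjective i]
    exact ⟨_, rfl⟩

lemma sdeg_eq_ncard_incidenceSet (G : SimpleGraph α) (x : α) :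
    sdeg G x = (G.incidenceSet x).ncard :=
  (Nat.card_congr (G.incidenceSetEquivNeighborSet x)).symm

lemma List.Nodup.ncard_setOf_mem_and {β : Type*} {l : List β} (hl : l.Nodup) (P : β → Prop)
    [DecidablePred P] : {x | x ∈ l ∧ P x}.ncard = l.countP P := by
  have : {x | x ∈ l ∧ P x} = ↑(l.filter P).toFinset := by ext; simp
  rw [this, Set.ncard_coe_finset, List.toFinset_card_of_nodup (hl.filter _),
    List.countP_eq_length_filter]

lemma Set.ncard_symmDiff_add_two_mul_ncard_inter {β : Type*} {A B : Set β} (hA : A.Finite)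
    (hB : B.Finite) : (symmDiff A B).ncard + 2 * (A ∩ B).ncard = A.ncard + B.ncard := by
  have hsub : A ∩ B ⊆ A ∪ B := Set.inter_subset_left.trans Set.subset_union_left
  have hdiff := Set.ncard_sdiff_add_ncard_of_subset hsub (hA.union hB)
  rw [symmDiff_eq_sup_sdiff_inf, ← Set.ncard_union_add_ncard_inter A B hA hB]
  change ((A ∪ B) \ (A ∩ B)).ncard + _ = _
  omega

lemma incidenceSet_symmDiffEdges (G G₂ : SimpleGraph α) (z : α) :
    (symmDiffEdges G G₂.edgeSet).incidenceSet z =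
      symmDiff (G.incidenceSet z) (G₂.incidenceSet z) := by
  ext s
  simp only [incidenceSet, symmDiffEdges, edgeSet_fromEdgeSet, Set.mem_sdiff, Set.mem_ofPred_eq,
    Set.mem_symmDiff]
  have h1 : s ∈ G.edgeSet → s ∉ Sym2.diagSet := fun h => by
    simpa using G.not_isDiag_of_mem_edgeSet h
  have h2 : s ∈ G₂.edgeSet → s ∉ Sym2.diagSet := fun h => by
    simpa using G₂.not_isDiag_of_mem_edgeSet h
  tauto

namespace SimpleGraph.Walk

variable {u v : α}

lemma IsCycle.ncard_neighborSet_toSubgraph {C : G.Walk u u} (hC : C.IsCycle) (z : α) :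
    (C.toSubgraph.neighborSet z).ncard = if z ∈ C.support then 2 else 0 := by
  split_ifs with hz
  · exact hC.ncard_neighborSet_toSubgraph_eq_two hz
  · convert Set.ncard_empty α
    ext w
    simp only [Subgraph.mem_neighborSet, Set.mem_empty_iff_false, iff_false]
    exact fun h => hz (C.mem_verts_toSubgraph.mp h.fst_mem)

lemma IsTrail.getVert_ne_getVert_add_two {p : G.Walk u v} (hp : p.IsTrail) {i : ℕ}
    (hi : i + 2 ≤ p.length) : p.getVert i ≠ p.getVert (i + 2) := by
  intro h
  have hedge : p.edges[i]'(by simp; omega) = p.edges[i + 1]'(by simp; omega) := by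
    rw [getElem_edges, getElem_edges, h, Sym2.eq_swap]
  have := hp.edges_nodup.getElem_inj_iff.mp hedge
  omega

lemma IsTrail.getVert_ne_of_sdeg_le_two [Finite α] {p : G.Walk u v} (hp : p.IsTrail) {i j : ℕ}
    (hdeg : sdeg G (p.getVert i) ≤ 2) (hi : 0 < i) (hij : i < j) (hj : j < p.length) :
    p.getVert i ≠ p.getVert j := by
  intro h
  have hlen := p.length_edges
  set z := p.getVert i
  have hmem : ∀ k (hk : k < p.length), (p.getVert k = z ∨ p.getVert (k + 1) = z) →
      p.edges[k]'(by omega) ∈ G.incidenceSet z := fun k hk hz =>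
    ⟨p.edges_subset_edgeSet (List.getElem_mem _), by
      rw [getElem_edges]; rcases hz with hz | hz <;> simp [hz]⟩
  have hne : ∀ k l (hk : k < p.length) (hl : l < p.length), k ≠ l →
      p.edges[k]'(by omega) ≠ p.edges[l]'(by omega) := fun k l _ _ hkl heq =>
    hkl (hp.edges_nodup.getElem_inj_iff.mp heq)
  have h3 : ({p.edges[i - 1]'(by omega), p.edges[i]'(by omega), p.edges[j]'(by omega)} :
      Set (Sym2 α)).ncard = 3 :=
    Set.ncard_eq_three.mpr ⟨_, _, _, hne _ _ (by omega) (by omega) (by omega),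
      hne _ _ (by omega) (by omega) (by omega), hne _ _ (by omega) (by omega) (by omega), rfl⟩
  have hsub : ({p.edges[i - 1]'(by omega), p.edges[i]'(by omega), p.edges[j]'(by omega)} :
      Set (Sym2 α)) ⊆ G.incidenceSet z := by
    rintro s (rfl | rfl | rfl)
    · exact hmem _ (by omega) (Or.inr (by rw [Nat.sub_add_cancel hi]))
    · exact hmem _ (by omega) (Or.inl rfl)
    · exact hmem _ (by omega) (Or.inl h.symm)
  have := Set.ncard_le_ncard hsub (Set.toFinite _)
  rw [sdeg_eq_ncard_incidenceSet] at hdeg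
  omega

end SimpleGraph.Walk

namespace SimpleGraph

lemma exists_longest_trail [Finite α] (G : SimpleGraph α) (x : α) :
    ∃ (u v : α) (p : G.Walk u v), p.IsTrail ∧ G.Reachable x u ∧
      ∀ (a b : α) (q : G.Walk a b), q.IsTrail → G.Reachable x a → q.length ≤ p.length := by
  have := Fintype.ofFinite α
  set S := {n | ∃ (a b : α) (q : G.Walk a b), q.IsTrail ∧ G.Reachable x a ∧ q.length = n}
  have hne : S.Nonempty := ⟨0, x, x, .nil, by simp, .refl x, rfl⟩
  have hbdd : BddAbove S := by
    refine ⟨Fintype.card (Sym2 α), ?_⟩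
    rintro n ⟨a, b, q, hq, -, rfl⟩
    rw [← q.length_edges]
    exact hq.edges_nodup.length_le_card
  obtain ⟨a, b, q, hq, hxa, hlen⟩ := Nat.sSup_mem hne hbdd
  exact ⟨a, b, q, hq, hxa, fun a' b' q' hq' hxa' =>
    hlen ▸ le_csSup hbdd ⟨a', b', q', hq', hxa', rfl⟩⟩

theorem exists_closedTrail_covering_component [Finite α] (heven : ∀ v, Even (sdeg G v))
    {x y : α} (hxy : G.Adj x y) :
    ∃ p : G.Walk x x, p.IsTrail ∧
      ∀ a b, G.Adj a b → G.Reachable x a → s(a, b) ∈ p.edges := by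
  -- A longest trail cannot be prolonged: hence it is closed (an open end has odd degree in it)
  -- and covers the component (else rotate it to a vertex with an unused edge).
  obtain ⟨u, v, p, hp, hxu, hmax⟩ := exists_longest_trail G x
  have hsupp : ∀ z ∈ p.support, G.Reachable x z := fun z hz => hxu.trans ⟨p.takeUntil z hz⟩
  have hmaximal : ∀ {a b c : α} (q : G.Walk a b), q.IsTrail → G.Reachable x a →
      q.length = p.length → ∀ h : G.Adj c a, s(c, a) ∈ q.edges := by
    intro a b c q hq hxa hlen h
    by_contra hc
    have := hmax _ _ (.cons h q) ((Walk.isTrail_cons h q).mpr ⟨hq, hc⟩)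
      (hxa.trans h.symm.reachable)
    simp only [Walk.length_cons] at this
    omega
  obtain rfl : u = v := by
    by_contra huv
    have hodd : ¬ Even (p.edges.countP (v ∈ ·)) := by
      rw [hp.even_countP_edges_iff]
      exact fun h => (h huv).2 rfl
    apply hodd
    have hall : G.incidenceSet v = {s | s ∈ p.edges ∧ v ∈ s} := by
      refine Set.Subset.antisymm (fun s ⟨hs, hvs⟩ => ⟨?_, hvs⟩)
        (fun s ⟨hs, hvs⟩ => ⟨p.edges_subset_edgeSet hs, hvs⟩)
      obtain ⟨c, rfl⟩ := Sym2.mem_iff_exists.mp hvs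
      rw [Sym2.eq_swap, ← List.mem_reverse, ← Walk.edges_reverse]
      exact hmaximal p.reverse hp.reverse (hsupp v p.end_mem_support) (by simp)
        (G.mem_edgeSet.mp hs).symm
    rw [← hp.edges_nodup.ncard_setOf_mem_and, ← hall, ← sdeg_eq_ncard_incidenceSet]
    exact heven v
  have hcover : ∀ a b, G.Adj a b → G.Reachable x a → s(a, b) ∈ p.edges := by
    intro a b hab hxa
    by_contra hnab
    obtain ⟨w, hw, c, hwc, hwc_new⟩ :
        ∃ w ∈ p.support, ∃ c, G.Adj w c ∧ s(w, c) ∉ p.edges := by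
      by_cases ha : a ∈ p.support
      · exact ⟨a, ha, b, hab, hnab⟩
      obtain ⟨q⟩ := hxu.symm.trans hxa
      obtain ⟨d, -, hd, hd'⟩ :=
        q.exists_boundary_dart {z | z ∈ p.support} p.start_mem_support ha
      exact ⟨d.fst, hd, d.snd, d.adj, fun h => hd' (p.snd_mem_support_of_mem_edges h)⟩
    apply hwc_new
    rw [Sym2.eq_swap, ← (p.rotate_edges w hw).mem_iff]
    exact hmaximal (p.rotate w hw) (hp.rotate hw) (hsupp w hw) (by simp) hwc.symm
  have hx : x ∈ p.support := p.fst_mem_support_of_mem_edges (hcover x y hxy .rfl)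
  exact ⟨p.rotate x hx, hp.rotate hx, fun a b hab hxa =>
    (p.rotate_edges x hx).mem_iff.mpr (hcover a b hab hxa)⟩

end SimpleGraph

end Graph

namespace Hypergraph'

variable {H : Hypergraph'} {F : Set H.Walk} {G : SimpleGraph (H.V ⊕ H.E)}

@[simp]
lemma incidenceGraph_adj_inl_inr {v : H.V} {e : H.E} :
    H.incidenceGraph.Adj (.inl v) (.inr e) ↔ v ∈ H.mem e := by
  simp [incidenceGraph]

lemma isLeft_ne_of_incidenceGraph_adj {x y : H.V ⊕ H.E} (h : H.incidenceGraph.Adj x y) :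
    x.isLeft ≠ y.isLeft := by
  rcases h with ⟨v, e, rfl, rfl, -⟩ | ⟨v, e, rfl, rfl, -⟩ <;> simp

section TrailToWalk

variable (hle : G ≤ H.incidenceGraph) {v : H.V}
  {p : G.Walk (.inl v) (.inl v)}
include hle

lemma isLeft_getVert_iff {b : H.V ⊕ H.E} (q : G.Walk (.inl v) b) {i : ℕ} (hi : i ≤ q.length) :
    (q.getVert i).isLeft ↔ Even i := by
  let c : G.Coloring Bool :=
    Coloring.mk Sum.isLeft fun h => isLeft_ne_of_incidenceGraph_adj (hle h)
  have := c.even_length_iff_congr (q.take i)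
  rw [Walk.take_length, min_eq_left hi] at this
  change Even i ↔ (true = true ↔ (q.getVert i).isLeft = true) at this
  simpa using this.symm

lemma two_mul_length_div_two : 2 * (p.length / 2) = p.length :=
  Nat.two_mul_div_two_of_even ((isLeft_getVert_iff hle p le_rfl).mp (by simp))

lemma isLeft_getVert_two_mul {j : ℕ} (hj : j ≤ p.length / 2) : (p.getVert (2 * j)).isLeft :=
  (isLeft_getVert_iff hle p (by omega)).mpr (even_two_mul j)

lemma isRight_getVert_two_mul_add_one {j : ℕ} (hj : j < p.length / 2) :
    (p.getVert (2 * j + 1)).isRight := by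
  rw [← Sum.not_isLeft, isLeft_getVert_iff hle p (by omega)]
  simp

noncomputable def trailToWalk (hp : p.IsTrail) : H.Walk where
  k := p.length / 2
  vtx j := (p.getVert (2 * j)).getLeft (isLeft_getVert_two_mul hle j.is_le)
  edge j := (p.getVert (2 * j + 1)).getRight (isRight_getVert_two_mul_add_one hle j.2)
  mem_left j := by
    rw [← incidenceGraph_adj_inl_inr, Sum.inl_getLeft, Sum.inr_getRight, Fin.val_castSucc]
    exact hle (p.adj_getVert_succ (by have := two_mul_length_div_two hle (p := p); omega))
  mem_right j := by
    rw [← incidenceGraph_adj_inl_inr, Sum.inl_getLeft, Sum.inr_getRight, Fin.val_succ, mul_add]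
    exact (hle (p.adj_getVert_succ (by have := two_mul_length_div_two hle (p := p); omega))).symm
  ne j h := by
    have h' := congrArg (Sum.inl (β := H.E)) h
    rw [Sum.inl_getLeft, Sum.inl_getLeft, Fin.val_castSucc, Fin.val_succ, mul_add] at h'
    exact hp.getVert_ne_getVert_add_two
      (by have := two_mul_length_div_two hle (p := p); omega) h'

variable (hp : p.IsTrail)

lemma trailToWalk_k : (trailToWalk hle hp).k = p.length / 2 := rfl

lemma inl_trailToWalk_vtx (j : Fin ((trailToWalk hle hp).k + 1)) :
    Sum.inl ((trailToWalk hle hp).vtx j) = p.getVert (2 * j) :=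
  Sum.inl_getLeft _ _

lemma inr_trailToWalk_edge (j : Fin (trailToWalk hle hp).k) :
    Sum.inr ((trailToWalk hle hp).edge j) = p.getVert (2 * j + 1) :=
  Sum.inr_getRight _ _

lemma isClosedTrail_trailToWalk (hdeg : ∀ e : H.E, sdeg G (.inr e) ≤ 2) (hpos : 0 < p.length) :
    (trailToWalk hle hp).IsClosedTrail := by
  have hlen := two_mul_length_div_two hle (p := p)
  have hvtx := inl_trailToWalk_vtx hle hp
  have hk := trailToWalk_k hle hp
  have hedge : ∀ a b : Fin (trailToWalk hle hp).k, a < b →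
      p.getVert (2 * a + 1) ≠ p.getVert (2 * b + 1) :=
    fun a b hab => hp.getVert_ne_of_sdeg_le_two
      (by rw [← inr_trailToWalk_edge hle hp]; exact hdeg _) (by omega) (by omega) (by omega)
  refine ⟨fun a b h => ?_, ?_, ?_⟩
  · have h' := congrArg (Sum.inr (α := H.V)) h
    rw [inr_trailToWalk_edge, inr_trailToWalk_edge] at h'
    by_contra hab
    rcases Fin.lt_or_lt_of_ne hab with hab | hab
    exacts [hedge a b hab h', hedge b a hab h'.symm]
  · apply Sum.inl_injective
    rw [hvtx, hvtx, Fin.val_last, Fin.val_zero, hk, hlen]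
    simp
  · by_contra! hk2
    have h2 : p.length = 2 := by omega
    exact hp.getVert_ne_getVert_add_two (i := 0) (by omega) (by simp [← h2])

lemma inl_mem_support_of_mem_anchors {w : H.V} (hw : w ∈ (trailToWalk hle hp).anchors) :
    Sum.inl w ∈ p.support := by
  obtain ⟨j, rfl⟩ := hw
  rw [inl_trailToWalk_vtx]
  exact p.getVert_mem_support _

lemma mem_edgeSet_trailToWalk {e : H.E} :
    e ∈ (trailToWalk hle hp).edgeSet ↔ Sum.inr e ∈ p.support := by
  constructor
  · rintro ⟨j, rfl⟩
    rw [inr_trailToWalk_edge]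
    exact p.getVert_mem_support _
  · intro he
    obtain ⟨n, hn, hnl⟩ := Walk.mem_support_iff_exists_getVert.mp he
    have hodd : ¬ Even n := by rw [← isLeft_getVert_iff hle p hnl, hn]; simp
    obtain ⟨j, rfl⟩ := Nat.not_even_iff_odd.mp hodd
    have hlen := two_mul_length_div_two hle (p := p)
    have hk := trailToWalk_k hle hp
    exact ⟨⟨j, by omega⟩, Sum.inr_injective (by rw [inr_trailToWalk_edge, hn])⟩

end TrailToWalk

lemma IsEulerFamily.eq_of_mem_edgeSet (hF : H.IsEulerFamily F) {W W' : H.Walk} (hW : W ∈ F)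
    (hW' : W' ∈ F) {e : H.E} (he : e ∈ W.edgeSet) (he' : e ∈ W'.edgeSet) : W = W' := by
  by_contra hne
  exact Set.disjoint_left.mp (hF.2.1 W hW W' hW' hne).2 he he'

lemma IsEulerFamily.eq_of_mem_anchors (hF : H.IsEulerFamily F) {W W' : H.Walk} (hW : W ∈ F)
    (hW' : W' ∈ F) {v : H.V} (hv : v ∈ W.anchors) (hv' : v ∈ W'.anchors) : W = W' := by
  by_contra hne
  exact Set.disjoint_left.mp (hF.2.1 W hW W' hW' hne).1 hv hv'

lemma IsEulerFamily.finite (hF : H.IsEulerFamily F) : F.Finite := by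
  refine Set.Finite.of_finite_image (f := Walk.edgeSet) (Set.toFinite _)
    fun W hW W' hW' h => ?_
  have he : W.edge ⟨0, by have := (hF.1 W hW).2.2; omega⟩ ∈ W.edgeSet := Set.mem_range_self _
  exact hF.eq_of_mem_edgeSet hW hW' he (h ▸ he)

lemma IsEulerFamily.setOf_consecIn_edge (hF : H.IsEulerFamily F) {W : H.Walk} (hW : W ∈ F)
    (i : Fin W.k) : {v | H.ConsecIn F v (W.edge i)} = {W.vtx i.castSucc, W.vtx i.succ} := by
  ext v
  constructor
  · rintro ⟨W', hW', i', hi', hv⟩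
    obtain rfl := hF.eq_of_mem_edgeSet hW' hW ⟨i', hi'⟩ ⟨i, rfl⟩
    obtain rfl := (hF.1 W' hW').1 hi'
    rcases hv with rfl | rfl <;> simp
  · rintro (rfl | rfl)
    exacts [⟨W, hW, i, rfl, .inl rfl⟩, ⟨W, hW, i, rfl, .inr rfl⟩]

lemma IsEulerFamily.setOf_consecIn_vertex (hF : H.IsEulerFamily F) {W : H.Walk} (hW : W ∈ F)
    {v : H.V} (hv : v ∈ W.anchors) :
    {e | H.ConsecIn F v e} = W.edge '' {i | W.vtx i.castSucc = v ∨ W.vtx i.succ = v} := by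
  ext e
  constructor
  · rintro ⟨W', hW', i, rfl, hi⟩
    obtain rfl := hF.eq_of_mem_anchors hW' hW (by rcases hi with h | h <;> exact ⟨_, h⟩) hv
    exact ⟨i, hi, rfl⟩
  · rintro ⟨i, hi, rfl⟩
    exact ⟨W, hW, i, rfl, hi⟩

lemma neighborSet_eulerSubgraph_inl (v : H.V) :
    (H.eulerSubgraph F).neighborSet (.inl v) = Sum.inr '' {e | H.ConsecIn F v e} := by
  ext (w | e) <;> simp [eulerSubgraph]

lemma neighborSet_eulerSubgraph_inr (e : H.E) :
    (H.eulerSubgraph F).neighborSet (.inr e) = Sum.inl '' {v | H.ConsecIn F v e} := by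
  ext (v | f) <;> simp [eulerSubgraph]

lemma eulerSubgraph_le_incidenceGraph : H.eulerSubgraph F ≤ H.incidenceGraph := by
  have hmem : ∀ {v e}, H.ConsecIn F v e → v ∈ H.mem e := by
    rintro v e ⟨W, -, i, rfl, rfl | rfl⟩
    exacts [W.mem_left i, W.mem_right i]
  rintro x y (⟨v, e, rfl, rfl, h⟩ | ⟨v, e, rfl, rfl, h⟩)
  exacts [.inl ⟨v, e, rfl, rfl, hmem h⟩, .inr ⟨v, e, rfl, rfl, hmem h⟩]

structure IsEulerSubgraph (H : Hypergraph') (G : SimpleGraph (H.V ⊕ H.E)) : Prop where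
  le_incidenceGraph : G ≤ H.incidenceGraph
  sdeg_inr : ∀ e : H.E, sdeg G (.inr e) = 2
  even_sdeg_inl : ∀ v : H.V, Even (sdeg G (.inl v))

lemma IsEulerFamily.isEulerSubgraph (hF : H.IsEulerFamily F) :
    H.IsEulerSubgraph (H.eulerSubgraph F) := by
  refine ⟨eulerSubgraph_le_incidenceGraph, fun e => ?_, fun v => ?_⟩
  · obtain ⟨W, hW, i, rfl⟩ := hF.2.2 e
    rw [sdeg, neighborSet_eulerSubgraph_inr, Set.ncard_image_of_injective _ Sum.inl_injective,
      hF.setOf_consecIn_edge hW i, Set.ncard_pair (W.ne i)]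
  · rw [sdeg, neighborSet_eulerSubgraph_inl, Set.ncard_image_of_injective _ Sum.inr_injective]
    by_cases hv : ∃ W ∈ F, v ∈ W.anchors
    · obtain ⟨W, hW, hv⟩ := hv
      rw [hF.setOf_consecIn_vertex hW hv, Set.ncard_image_of_injective _ (hF.1 W hW).1]
      exact Fin.even_ncard_setOf_castSucc_eq_or_succ_eq W.vtx (hF.1 W hW).2.1 W.ne v
    · have hempty : {e | H.ConsecIn F v e} = ∅ :=
        Set.eq_empty_of_forall_notMem fun e ⟨W, hW, i, _, hi⟩ =>
          hv ⟨W, hW, by rcases hi with h | h <;> exact ⟨_, h⟩⟩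
      simp [hempty]

lemma IsEulerSubgraph.symmDiff_interchanging (hG : H.IsEulerSubgraph (H.eulerSubgraph F))
    {x : H.V ⊕ H.E} {C : H.incidenceGraph.Walk x x} (hC : IsInterchanging H F C) :
    H.IsEulerSubgraph (symmDiffEdges (H.eulerSubgraph F) {s | s ∈ C.edges}) := by
  set GF := H.eulerSubgraph F
  set GC := C.toSubgraph.spanningCoe
  have hCedges : {s | s ∈ C.edges} = GC.edgeSet := by
    rw [Subgraph.edgeSet_spanningCoe, Walk.edgeSet_toSubgraph]
    rfl
  have hmemC : ∀ s, s ∈ GC.edgeSet ↔ s ∈ C.edges := by simp [← hCedges]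
  have hdeg : ∀ z, sdeg (symmDiffEdges GF {s | s ∈ C.edges}) z +
      2 * (GF.incidenceSet z ∩ GC.incidenceSet z).ncard =
        sdeg GF z + (C.toSubgraph.neighborSet z).ncard := by
    intro z
    rw [hCedges, sdeg_eq_ncard_incidenceSet, incidenceSet_symmDiffEdges,
      Set.ncard_symmDiff_add_two_mul_ncard_inter (Set.toFinite _) (Set.toFinite _),
      ← sdeg_eq_ncard_incidenceSet, ← sdeg_eq_ncard_incidenceSet]
    rfl
  refine ⟨fun a b hab => ?_, fun e => ?_, fun v => ?_⟩
  · rcases Set.mem_symmDiff.mp (edgeSet_fromEdgeSet _ ▸ (mem_edgeSet _).mpr hab).1 with h | h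
    exacts [hG.le_incidenceGraph h.1, C.edges_subset_edgeSet h.1]
  · have h := hdeg (.inr e)
    rw [hG.sdeg_inr, hC.1.ncard_neighborSet_toSubgraph] at h
    split_ifs at h with he
    · obtain ⟨s, hs, hs_unique⟩ := hC.2 e he
      have hone : (GF.incidenceSet (.inr e) ∩ GC.incidenceSet (.inr e)).ncard = 1 := by
        refine Set.ncard_eq_one.mpr ⟨s, Set.eq_singleton_iff_unique_mem.mpr ⟨?_, ?_⟩⟩
        · exact ⟨⟨hs.2.2, hs.2.1⟩, (hmemC s).mpr hs.1, hs.2.1⟩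
        · exact fun s' ⟨⟨h1, h2⟩, h3, _⟩ => hs_unique s' ⟨(hmemC s').mp h3, h2, h1⟩
      omega
    · have hzero : (GC.incidenceSet (.inr e)).ncard = 0 := by
        rw [← sdeg_eq_ncard_incidenceSet]
        exact (hC.1.ncard_neighborSet_toSubgraph _).trans (if_neg he)
      have := Set.ncard_le_ncard (Set.inter_subset_right (s := GF.incidenceSet (.inr e)))
        (Set.toFinite (GC.incidenceSet (.inr e)))
      omega
  · have h := hdeg (.inl v)
    rw [hC.1.ncard_neighborSet_toSubgraph] at h
    have hv := hG.even_sdeg_inl v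
    rw [Nat.even_iff] at hv ⊢
    split_ifs at h <;> omega

lemma IsEulerSubgraph.exists_adj_inr (hG : H.IsEulerSubgraph G) (e : H.E) :
    ∃ w, G.Adj (.inr e) w :=
  Set.nonempty_of_ncard_ne_zero (s := G.neighborSet (.inr e)) (by
    have := hG.sdeg_inr e
    unfold sdeg at this
    omega)

lemma IsEulerSubgraph.exists_closedTrail_of_nontrivComp (hG : H.IsEulerSubgraph G)
    {c : G.ConnectedComponent} (hc : NontrivComp G c) :
    ∃ W : H.Walk, W.IsClosedTrail ∧
      (∀ v ∈ W.anchors, G.connectedComponentMk (.inl v) = c) ∧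
      W.edgeSet = {e | G.connectedComponentMk (.inr e) = c} := by
  obtain ⟨v, e, hve, rfl⟩ :
      ∃ v e, G.Adj (.inl v) (.inr e) ∧ G.connectedComponentMk (.inl v) = c := by
    obtain ⟨x, y, hxy, rfl⟩ := hc
    rcases hG.le_incidenceGraph hxy with ⟨v, e, rfl, rfl, -⟩ | ⟨v, e, rfl, rfl, -⟩
    exacts [⟨v, e, hxy, rfl⟩, ⟨v, e, hxy.symm, ConnectedComponent.sound hxy.symm.reachable⟩]
  have heven : ∀ z, Even (sdeg G z) := by
    rintro (w | f)
    exacts [hG.even_sdeg_inl w, hG.sdeg_inr f ▸ even_two]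
  obtain ⟨p, hp, hcover⟩ := exists_closedTrail_covering_component heven hve
  have hpos : 0 < p.length := by
    rw [← p.length_edges]
    exact List.length_pos_of_mem (hcover _ _ hve .rfl)
  have hle := hG.le_incidenceGraph
  refine ⟨trailToWalk hle hp,
    isClosedTrail_trailToWalk hle hp (fun f => (hG.sdeg_inr f).le) hpos, fun w hw => ?_, ?_⟩
  · exact (ConnectedComponent.sound
      ⟨p.takeUntil _ (inl_mem_support_of_mem_anchors hle hp hw)⟩).symm
  · ext f
    rw [mem_edgeSet_trailToWalk, Set.mem_ofPred_eq, ConnectedComponent.eq]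
    refine ⟨fun hf => ⟨(p.takeUntil _ hf).reverse⟩, fun hf => ?_⟩
    obtain ⟨w, hw⟩ := hG.exists_adj_inr f
    exact p.fst_mem_support_of_mem_edges (hcover _ _ hw hf.symm)

lemma IsEulerSubgraph.exists_isEulerFamily_ncard_le (hG : H.IsEulerSubgraph G) :
    ∃ F : Set H.Walk, H.IsEulerFamily F ∧ F.ncard ≤ ntComps G := by
  choose W hW using fun c : {c // NontrivComp G c} => hG.exists_closedTrail_of_nontrivComp c.2
  refine ⟨Set.range W, ⟨?_, ?_, fun e => ?_⟩, Finite.card_range_le W⟩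
  · rintro _ ⟨c, rfl⟩
    exact (hW c).1
  · rintro _ ⟨c, rfl⟩ _ ⟨c', rfl⟩ hne
    have hcc : (c : G.ConnectedComponent) ≠ c' := fun h => hne (congrArg W (Subtype.ext h))
    refine ⟨Set.disjoint_left.mpr fun v hv hv' => hcc ?_,
      Set.disjoint_left.mpr fun e he he' => hcc ?_⟩
    · exact ((hW c).2.1 v hv).symm.trans ((hW c').2.1 v hv')
    · rw [(hW c).2.2] at he
      rw [(hW c').2.2] at he'
      exact he.symm.trans he'
  · obtain ⟨w, hw⟩ := hG.exists_adj_inr e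
    let c : {c // NontrivComp G c} := ⟨_, _, _, hw, rfl⟩
    exact ⟨W c, ⟨c, rfl⟩, by rw [(hW c).2.2]; rfl⟩

lemma reachable_eulerSubgraph_edge {W : H.Walk} (hW : W ∈ F) (i : Fin W.k) :
    (H.eulerSubgraph F).Reachable (.inl (W.vtx 0)) (.inr (W.edge i)) := by
  have hadj : ∀ (j : Fin W.k) {v}, W.vtx j.castSucc = v ∨ W.vtx j.succ = v →
      (H.eulerSubgraph F).Adj (.inl v) (.inr (W.edge j)) :=
    fun j v hv => .inl ⟨v, _, rfl, rfl, W, hW, j, rfl, hv⟩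
  have hvtx : ∀ j : Fin (W.k + 1),
      (H.eulerSubgraph F).Reachable (.inl (W.vtx 0)) (.inl (W.vtx j)) := by
    intro j
    induction j using Fin.induction with
    | zero => rfl
    | succ j ih =>
      exact ih.trans ((hadj j (.inl rfl)).reachable.trans (hadj j (.inr rfl)).symm.reachable)
  exact (hvtx i.castSucc).trans (hadj i (.inl rfl)).reachable

lemma IsEulerFamily.ntComps_eulerSubgraph_le (hF : H.IsEulerFamily F) :
    ntComps (H.eulerSubgraph F) ≤ F.ncard := by
  have hsub : {c | NontrivComp (H.eulerSubgraph F) c} ⊆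
      (fun W => (H.eulerSubgraph F).connectedComponentMk (.inl (W.vtx 0))) '' F := by
    rintro c ⟨x, y, hxy, rfl⟩
    rcases id hxy with ⟨v, e, rfl, rfl, W, hW, i, rfl, -⟩ |
      ⟨v, e, rfl, rfl, W, hW, i, rfl, -⟩
    · exact ⟨W, hW, ConnectedComponent.sound
        ((reachable_eulerSubgraph_edge hW i).trans hxy.symm.reachable)⟩
    · exact ⟨W, hW, ConnectedComponent.sound (reachable_eulerSubgraph_edge hW i)⟩
  exact (Set.ncard_le_ncard hsub (hF.finite.image _)).trans (Set.ncard_image_le hF.finite)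

end Hypergraph'

theorem min_eulerFamily_no_diminishing_general (H : Hypergraph')
    (F : Set H.Walk) (hF : H.IsMinEulerFamily F) :
    ∀ (x : H.V ⊕ H.E) (C : (H.incidenceGraph).Walk x x), ¬ IsDiminishing H F C := by
  rintro x C ⟨hC, hfewer⟩
  obtain ⟨F', hF', hcard⟩ :=
    (hF.1.isEulerSubgraph.symmDiff_interchanging hC).exists_isEulerFamily_ncard_le
  have hmin := hF.2 F' hF'
  have hcomps := hF.1.ntComps_eulerSubgraph_le
  omega

/-- Corollary 4.11(3): if `H` is a covering `3`-hypergraph that is not eulerian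
and `F` is a minimum Euler family of `H`, then the incidence graph has no
`F`-diminishing cycle. -/
theorem min_eulerFamily_no_diminishing (H : Hypergraph') (hcov : H.IsCovering 3)
    (F : Set H.Walk) (hF : H.IsMinEulerFamily F) (hne : ¬ H.IsEulerian) :
    ∀ (x : H.V ⊕ H.E) (C : (H.incidenceGraph).Walk x x), ¬ IsDiminishing H F C :=
  min_eulerFamily_no_diminishing_general H F hF
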